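/- arXiv:2411.03607 — 3 statements merged into one kernel-verified Lean document; each statement's English description precedes it below -/
import Mathlib

section
/- Let φ_v, v ∈ V, be a set of generalized barycentric coordinates on a simple non-degenerate convex d-polytope K (non-negative functions with ∑_v φ_v = 1 and ∑_v φ_v(x) v = x). Then for every x ∈ K, there are at most d facets of K whose distance to x is strictly less than h⋆/(d+1). -/
open scoped Classical

noncomputable section

/-- A combinatorial-geometric encoding of a simple convex `d`-dimensional polytope:
vertices `V`, and facets `F` given as pairs `(n, c)` of a unit outward normal and an offset,
so the facet hyperplane is `{x | ⟪n, x⟫ = c}` and `K` lies in `{x | ⟪n, x⟫ ≤ c}`.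
Simplicity: each vertex lies on exactly `d` facets; non-degeneracy: distinct facets
determine distinct hyperplanes (distinct `(n, c)` pairs in the `Finset`). -/
structure WPoly (d : ℕ) where
  V : Finset (EuclideanSpace ℝ (Fin d))
  F : Finset (EuclideanSpace ℝ (Fin d) × ℝ)
  V_nonempty : V.Nonempty
  F_nonempty : F.Nonempty
  norm_normal : ∀ f ∈ F, ‖f.1‖ = 1
  supporting : ∀ f ∈ F, ∀ v ∈ V, (inner ℝ f.1 v : ℝ) ≤ f.2
  facet_vertex : ∀ f ∈ F, ∃ v ∈ V, (inner ℝ f.1 v : ℝ) = f.2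
  simple : ∀ v ∈ V, (F.filter fun f => (inner ℝ f.1 v : ℝ) = f.2).card = d

namespace WPoly

variable {d : ℕ}

/-- The polytope as a set: the convex hull of its vertices. -/
def K (P : WPoly d) : Set (EuclideanSpace ℝ (Fin d)) :=
  convexHull ℝ (P.V : Set (EuclideanSpace ℝ (Fin d)))

/-- `hf f x`: the (signed) distance from `x` to the hyperplane of facet `f`;
it is nonnegative on `K`. -/
def hf (f : EuclideanSpace ℝ (Fin d) × ℝ) (x : EuclideanSpace ℝ (Fin d)) : ℝ :=
  f.2 - (inner ℝ f.1 x : ℝ)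

/-- Vertices incident to facet `f`. -/
def Vf (P : WPoly d) (f : EuclideanSpace ℝ (Fin d) × ℝ) : Finset (EuclideanSpace ℝ (Fin d)) :=
  P.V.filter fun v => (inner ℝ f.1 v : ℝ) = f.2

/-- Facets incident to vertex `v`. -/
def Fv (P : WPoly d) (v : EuclideanSpace ℝ (Fin d)) : Finset (EuclideanSpace ℝ (Fin d) × ℝ) :=
  P.F.filter fun f => (inner ℝ f.1 v : ℝ) = f.2

/-- Diameter of the polytope. -/
def hK (P : WPoly d) : ℝ := Metric.diam P.K

/-- Minimal distance between a vertex and a non-incident facet. -/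
def hstar (P : WPoly d) : ℝ :=
  sInf {r : ℝ | ∃ f ∈ P.F, ∃ v ∈ P.V, v ∉ P.Vf f ∧ hf f v = r}

/-- Generalized barycentric coordinates: nonnegative, partition of unity, linear precision. -/
def IsGBC (P : WPoly d) (φ : EuclideanSpace ℝ (Fin d) → EuclideanSpace ℝ (Fin d) → ℝ) : Prop :=
  (∀ v ∈ P.V, ∀ x ∈ P.K, 0 ≤ φ v x) ∧
  (∀ x ∈ P.K, ∑ v ∈ P.V, φ v x = 1) ∧
  (∀ x ∈ P.K, ∑ v ∈ P.V, φ v x • v = x)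

/-- Wachspress weight function of vertex `v`: `w_v(x) = det(M_v) ∏_{f ∈ F ∖ F_v} h_f(x)`. -/
def wv (P : WPoly d) (detM : EuclideanSpace ℝ (Fin d) → ℝ)
    (v x : EuclideanSpace ℝ (Fin d)) : ℝ :=
  detM v * ∏ f ∈ P.F \ P.Fv v, hf f x

/-- Total Wachspress weight `W = ∑ᵥ wᵥ`. -/
def W (P : WPoly d) (detM : EuclideanSpace ℝ (Fin d) → ℝ)
    (x : EuclideanSpace ℝ (Fin d)) : ℝ :=
  ∑ v ∈ P.V, P.wv detM v x

/-- `detM v` is the determinant of the matrix `M_v` whose columns are the unit outward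
normals of the `d` facets at `v`, ordered so that the determinant is positive. -/
def IsDetM (P : WPoly d) (detM : EuclideanSpace ℝ (Fin d) → ℝ) : Prop :=
  ∀ v ∈ P.V, 0 < detM v ∧ ∃ φ : Fin d → EuclideanSpace ℝ (Fin d) × ℝ,
    Function.Injective φ ∧ (∀ i, φ i ∈ P.Fv v) ∧
    detM v = Matrix.det (Matrix.of fun i j : Fin d => (φ j).1 i)

end WPoly

/-!
Suppose `d + 1` facets were closer to `x` than `h⋆/(d+1)`. A vertex lies on only `d` facets,
so it misses one of them and the sum of the `d + 1` facet distances is at least `h⋆` at every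
vertex. That sum is affine, hence at least `h⋆` on the convex hull `K` as well, while at `x`
it is smaller than `(d + 1) · h⋆/(d+1) = h⋆`.
-/

open Finset

namespace WPoly

variable {d : ℕ}

lemma sum_hf_eq (S : Finset (EuclideanSpace ℝ (Fin d) × ℝ)) (y : EuclideanSpace ℝ (Fin d)) :
    ∑ f ∈ S, hf f y = ∑ f ∈ S, f.2 - inner ℝ (∑ f ∈ S, f.1) y := by
  simp only [hf, sum_sub_distrib, sum_inner]

lemma concaveOn_sum_hf (S : Finset (EuclideanSpace ℝ (Fin d) × ℝ)) :
    ConcaveOn ℝ Set.univ fun y => ∑ f ∈ S, hf f y := by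
  simp only [sum_hf_eq]
  exact (concaveOn_const _ convex_univ).sub
    ((innerₛₗ ℝ (∑ f ∈ S, f.1)).convexOn convex_univ)

variable (P : WPoly d)

lemma hf_nonneg {f : EuclideanSpace ℝ (Fin d) × ℝ} (hfF : f ∈ P.F)
    {v : EuclideanSpace ℝ (Fin d)} (hv : v ∈ P.V) : 0 ≤ hf f v :=
  sub_nonneg.mpr (P.supporting f hfF v hv)

lemma hstar_le_hf {f : EuclideanSpace ℝ (Fin d) × ℝ} (hfF : f ∈ P.F)
    {v : EuclideanSpace ℝ (Fin d)} (hv : v ∈ P.V) (hvf : v ∉ P.Vf f) : P.hstar ≤ hf f v := by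
  refine csInf_le ⟨0, ?_⟩ ⟨f, hfF, v, hv, hvf, rfl⟩
  rintro r ⟨f', hf'F, v', hv', -, rfl⟩
  exact P.hf_nonneg hf'F hv'

lemma exists_mem_notMem_Vf {S : Finset (EuclideanSpace ℝ (Fin d) × ℝ)} (hSF : S ⊆ P.F)
    (hS : d < #S) {v : EuclideanSpace ℝ (Fin d)} (hv : v ∈ P.V) : ∃ f ∈ S, v ∉ P.Vf f := by
  by_contra! hSv
  have hS_Fv : S ⊆ P.Fv v := fun f hfS =>
    mem_filter.mpr ⟨hSF hfS, (mem_filter.mp (hSv f hfS)).2⟩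
  have := card_le_card hS_Fv
  rw [Fv, P.simple v hv] at this
  omega

lemma hstar_le_sum_hf_of_mem_V {S : Finset (EuclideanSpace ℝ (Fin d) × ℝ)} (hSF : S ⊆ P.F)
    (hS : d < #S) {v : EuclideanSpace ℝ (Fin d)} (hv : v ∈ P.V) :
    P.hstar ≤ ∑ f ∈ S, hf f v := by
  obtain ⟨f, hfS, hvf⟩ := P.exists_mem_notMem_Vf hSF hS hv
  calc P.hstar ≤ hf f v := P.hstar_le_hf (hSF hfS) hv hvf
    _ ≤ ∑ f ∈ S, hf f v := single_le_sum (fun g hg => P.hf_nonneg (hSF hg) hv) hfS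

lemma hstar_le_sum_hf {S : Finset (EuclideanSpace ℝ (Fin d) × ℝ)} (hSF : S ⊆ P.F)
    (hS : d < #S) {x : EuclideanSpace ℝ (Fin d)} (hx : x ∈ P.K) :
    P.hstar ≤ ∑ f ∈ S, hf f x := by
  obtain ⟨v, hv, hvx⟩ :=
    (concaveOn_sum_hf S).exists_le_of_mem_convexHull (Set.subset_univ _) hx
  exact (P.hstar_le_sum_hf_of_mem_V hSF hS hv).trans hvx

end WPoly

open WPoly in
theorem card_close_facets_le_general (d : ℕ) (P : WPoly d)
    (x : EuclideanSpace ℝ (Fin d)) (hx : x ∈ P.K) :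
    (P.F.filter fun f => hf f x < P.hstar / (d + 1)).card ≤ d := by
  by_contra! hcard
  obtain ⟨S, hS_close, hS⟩ := exists_subset_card_eq hcard
  have lower : P.hstar ≤ ∑ f ∈ S, hf f x :=
    P.hstar_le_sum_hf (hS_close.trans (filter_subset _ _)) (by omega) hx
  have upper : ∑ f ∈ S, hf f x < P.hstar :=
    calc ∑ f ∈ S, hf f x < ∑ _f ∈ S, P.hstar / (d + 1) :=
          sum_lt_sum_of_nonempty (card_pos.mp (by omega)) fun f hfS =>
            (mem_filter.mp (hS_close hfS)).2
      _ = P.hstar := by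
          rw [sum_const, hS, nsmul_eq_mul]
          push_cast
          field_simp
  linarith

open WPoly in
/-- If a simple, non-degenerate, convex `d`-polytope admits generalized barycentric
coordinates, then for every `x ∈ K` there are at most `d` facets whose distance to `x` is
strictly less than `h⋆/(d+1)`. -/
theorem card_close_facets_le (d : ℕ) (P : WPoly d)
    (φ : EuclideanSpace ℝ (Fin d) → EuclideanSpace ℝ (Fin d) → ℝ) (hφ : P.IsGBC φ)
    (x : EuclideanSpace ℝ (Fin d)) (hx : x ∈ P.K) :
    (P.F.filter fun f => hf f x < P.hstar / (d + 1)).card ≤ d :=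
  card_close_facets_le_general d P x hx
end
end

section
/- For the Wachspress weight W(x) = ∑_{v∈V} det(M_v) ∏_{f∈F∖F_v} h_f(x) on a simple non-degenerate convex d-polytope K, one has W(x) > 0 for all x ∈ K (including boundary points). -/
open scoped Classical

noncomputable section

/-!
Write `x ∈ K` as a convex combination of the vertices and pick a vertex `v₀` of positive weight.
Each `h_f` is affine, so `h_f(x)` is the same combination of the values `h_f(v) ≥ 0`; for a facet
`f` not through `v₀` it is therefore at least `w(v₀) h_f(v₀) > 0`. Hence the summand of `v₀` in `W`
is positive, while all the other summands are nonnegative.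
-/

namespace WPoly

variable {d : ℕ} (P : WPoly d)

theorem hf_nonneg_of_mem_V {f : EuclideanSpace ℝ (Fin d) × ℝ} (hf' : f ∈ P.F)
    {v : EuclideanSpace ℝ (Fin d)} (hv : v ∈ P.V) : 0 ≤ hf f v :=
  sub_nonneg.2 (P.supporting f hf' v hv)

theorem hf_pos_of_notMem_Fv {f : EuclideanSpace ℝ (Fin d) × ℝ} (hf' : f ∈ P.F)
    {v : EuclideanSpace ℝ (Fin d)} (hv : v ∈ P.V) (hfv : f ∉ P.Fv v) : 0 < hf f v := by
  have hne : (inner ℝ f.1 v : ℝ) ≠ f.2 := fun h => hfv (Finset.mem_filter.2 ⟨hf', h⟩)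
  exact sub_pos.2 (lt_of_le_of_ne (P.supporting f hf' v hv) hne)

theorem hf_nonneg_of_mem_K {f : EuclideanSpace ℝ (Fin d) × ℝ} (hf' : f ∈ P.F)
    {x : EuclideanSpace ℝ (Fin d)} (hx : x ∈ P.K) : 0 ≤ hf f x := by
  have hconv : Convex ℝ {y : EuclideanSpace ℝ (Fin d) | (inner ℝ f.1 y : ℝ) ≤ f.2} :=
    convex_halfSpace_le (innerₛₗ ℝ f.1).isLinear f.2
  exact sub_nonneg.2 (convexHull_min (fun v hv => P.supporting f hf' v hv) hconv hx)

theorem hf_sum_smul {ι : Type*} (f : EuclideanSpace ℝ (Fin d) × ℝ) (s : Finset ι)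
    (w : ι → ℝ) (p : ι → EuclideanSpace ℝ (Fin d)) (hw : ∑ i ∈ s, w i = 1) :
    hf f (∑ i ∈ s, w i • p i) = ∑ i ∈ s, w i * hf f (p i) := by
  simp only [hf, inner_sum, real_inner_smul_right, mul_sub, Finset.sum_sub_distrib,
    ← Finset.sum_mul, hw, one_mul]

theorem exists_vertex_forall_hf_pos {x : EuclideanSpace ℝ (Fin d)} (hx : x ∈ P.K) :
    ∃ v ∈ P.V, ∀ f ∈ P.F \ P.Fv v, 0 < hf f x := by
  rw [K, Finset.convexHull_eq] at hx
  obtain ⟨w, hw0, hw1, rfl⟩ := hx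
  rw [Finset.centerMass_eq_of_sum_1 _ _ hw1]
  obtain ⟨v₀, hv₀, hwv₀⟩ : ∃ v ∈ P.V, 0 < w v := by
    by_contra! h
    linarith [Finset.sum_nonpos h]
  refine ⟨v₀, hv₀, fun f hf' => ?_⟩
  obtain ⟨hfF, hfv⟩ := Finset.mem_sdiff.1 hf'
  rw [hf_sum_smul f P.V w id hw1]
  calc 0 < w v₀ * hf f v₀ := mul_pos hwv₀ (P.hf_pos_of_notMem_Fv hfF hv₀ hfv)
    _ ≤ ∑ v ∈ P.V, w v * hf f v :=
      Finset.single_le_sum (f := fun v => w v * hf f v)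
        (fun v hv => mul_nonneg (hw0 v hv) (P.hf_nonneg_of_mem_V hfF hv)) hv₀

theorem wv_nonneg {detM : EuclideanSpace ℝ (Fin d) → ℝ} {v x : EuclideanSpace ℝ (Fin d)}
    (hv : 0 ≤ detM v) (hx : x ∈ P.K) : 0 ≤ P.wv detM v x :=
  mul_nonneg hv (Finset.prod_nonneg fun _ hf' =>
    P.hf_nonneg_of_mem_K (Finset.mem_sdiff.1 hf').1 hx)

end WPoly

open WPoly in
/-- The Wachspress weight `W(x) = ∑_{v∈V} det(M_v) ∏_{f∈F∖F_v} h_f(x)` is strictly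
positive everywhere on `K`, including boundary points. -/
theorem W_pos (d : ℕ) (P : WPoly d) (detM : EuclideanSpace ℝ (Fin d) → ℝ)
    (hdetM : P.IsDetM detM) (x : EuclideanSpace ℝ (Fin d)) (hx : x ∈ P.K) :
    0 < P.W detM x := by
  obtain ⟨v₀, hv₀, hpos⟩ := P.exists_vertex_forall_hf_pos hx
  have hwv₀ : 0 < P.wv detM v₀ x := mul_pos (hdetM v₀ hv₀).1 (Finset.prod_pos hpos)
  exact Finset.sum_pos' (fun v hv => P.wv_nonneg (hdetM v hv).1.le hx) ⟨v₀, hv₀, hwv₀⟩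
end
end

section
/- Let K be a non-degenerate convex polygon in ℝ² with h⋆ ≥ C⋆ h_K. Then every interior angle θ of K satisfies sin θ ≥ C⋆; in particular all interior angles lie in [arcsin C⋆, π − arcsin C⋆]. -/
/-!
The distance from `v (i + 1)` to the line of the edge `[v (i - 1), v i]` is at most
`|v (i + 1) - v i| sin θᵢ ≤ h_K sin θᵢ`, while by definition of `h⋆` it is at least
`h⋆ ≥ C⋆ h_K`; so `sin θᵢ ≥ C⋆`, and the bounds on `θᵢ ∈ [0, π]` follow.
-/

noncomputable section

/-- The planar cross product `a₀b₁ − a₁b₀`. -/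
def cross2 (a b : EuclideanSpace ℝ (Fin 2)) : ℝ := a 0 * b 1 - a 1 * b 0

open Metric Real EuclideanGeometry

theorem Real.arcsin_le_of_le_sin {C φ : ℝ} (h0 : 0 ≤ φ) (hπ : φ ≤ π) (h : C ≤ sin φ) :
    arcsin C ≤ φ := by
  rcases le_or_gt φ (π / 2) with hle | hlt
  · calc arcsin C ≤ arcsin (sin φ) := monotone_arcsin h
      _ = φ := arcsin_sin (by linarith [pi_pos]) hle
  · exact (arcsin_le_pi_div_two C).trans hlt.le

theorem Real.le_pi_sub_arcsin_of_le_sin {C φ : ℝ} (h0 : 0 ≤ φ) (hπ : φ ≤ π)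
    (h : C ≤ sin φ) : φ ≤ π - arcsin C := by
  have := arcsin_le_of_le_sin (C := C) (φ := π - φ) (by linarith) (by linarith)
    (by rwa [sin_pi_sub])
  linarith

theorem ZMod.natCast_ne_zero_of_pos_of_lt {n k : ℕ} (hk : 0 < k) (hkn : k < n) :
    (k : ZMod n) ≠ 0 := by
  rw [Ne, ZMod.natCast_eq_zero_iff]
  exact Nat.not_dvd_of_pos_of_lt hk hkn

namespace InnerProductGeometry

variable {V : Type*} [NormedAddCommGroup V] [InnerProductSpace ℝ V]

theorem norm_sub_smul_eq_norm_mul_sin_angle {u : V} (w : V) (hu : u ≠ 0) :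
    ‖w - (inner ℝ u w / ‖u‖ ^ 2) • u‖ = ‖w‖ * sin (angle u w) := by
  have hu₀ : 0 < ‖u‖ := norm_pos_iff.mpr hu
  have hsin : 0 ≤ sin (angle u w) := sin_nonneg_of_nonneg_of_le_pi (angle_nonneg u w)
    (angle_le_pi u w)
  -- Both sides, multiplied by `‖u‖` and squared, equal `‖u‖²‖w‖² - ⟪u, w⟫²`.
  have hsq : (sin (angle u w) * (‖u‖ * ‖w‖)) ^ 2 = ‖u‖ ^ 2 * ‖w‖ ^ 2 - inner ℝ u w ^ 2 := by
    rw [sin_angle_mul_norm_mul_norm, sq_sqrt (by nlinarith [real_inner_mul_inner_self_le u w]),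
      real_inner_self_eq_norm_sq, real_inner_self_eq_norm_sq]
    ring
  have key : (‖u‖ * ‖w - (inner ℝ u w / ‖u‖ ^ 2) • u‖) ^ 2
      = (‖u‖ * (‖w‖ * sin (angle u w))) ^ 2 := by
    rw [mul_pow, norm_sub_sq_real, real_inner_smul_right, norm_smul, norm_div, norm_pow,
      norm_norm, Real.norm_eq_abs, real_inner_comm u w, mul_pow, div_pow, sq_abs]
    field_simp
    linear_combination -hsq
  rw [pow_left_inj₀ (by positivity) (by positivity) two_ne_zero] at key
  exact mul_left_cancel₀ hu₀.ne' key

end InnerProductGeometry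

namespace EuclideanGeometry

variable {V P : Type*} [NormedAddCommGroup V] [InnerProductSpace ℝ V] [MetricSpace P]
  [NormedAddTorsor V P]

theorem infDist_affineSpan_pair_le_dist_mul_sin_angle {A B : P} (C : P) (hAB : A ≠ B) :
    infDist C (affineSpan ℝ {A, B} : Set P) ≤ dist B C * sin (∠ A B C) := by
  set t := inner ℝ (A -ᵥ B) (C -ᵥ B) / ‖A -ᵥ B‖ ^ 2
  have hmem : AffineMap.lineMap B A t ∈ (affineSpan ℝ {A, B} : Set P) := by
    rw [Set.pair_comm]
    exact AffineMap.lineMap_mem_affineSpan_pair t B A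
  calc infDist C (affineSpan ℝ {A, B} : Set P)
      ≤ dist C (AffineMap.lineMap B A t) := infDist_le_dist_of_mem hmem
    _ = ‖(C -ᵥ B) - t • (A -ᵥ B)‖ := by
        rw [dist_eq_norm_vsub V, AffineMap.lineMap_apply, vsub_vadd_eq_vsub_sub]
    _ = dist B C * sin (∠ A B C) := by
        rw [InnerProductGeometry.norm_sub_smul_eq_norm_mul_sin_angle _ (vsub_ne_zero.mpr hAB),
          dist_comm, dist_eq_norm_vsub V, angle]

end EuclideanGeometry

theorem left_ne_zero_of_cross2 {a b : EuclideanSpace ℝ (Fin 2)} (h : cross2 a b ≠ 0) :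
    a ≠ 0 := by
  rintro rfl
  simp [cross2] at h

theorem sInf_infDist_vertex_edgeLine_le {n : ℕ} (hn : 3 ≤ n)
    (v : ZMod n → EuclideanSpace ℝ (Fin 2)) (i : ZMod n) :
    sInf {r : ℝ | ∃ i j : ZMod n, j ≠ i ∧ j ≠ i + 1 ∧
      r = infDist (v j) (affineSpan ℝ {v i, v (i + 1)} : Set (EuclideanSpace ℝ (Fin 2)))}
      ≤ infDist (v (i + 1))
          (affineSpan ℝ {v (i - 1), v i} : Set (EuclideanSpace ℝ (Fin 2))) := by
  have h1 : ((1 : ℕ) : ZMod n) ≠ 0 := ZMod.natCast_ne_zero_of_pos_of_lt one_pos (by omega)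
  have h2 : ((2 : ℕ) : ZMod n) ≠ 0 := ZMod.natCast_ne_zero_of_pos_of_lt two_pos (by omega)
  push_cast at h1 h2
  refine csInf_le ⟨0, ?_⟩ ⟨i - 1, i + 1, ?_, ?_, by rw [sub_add_cancel]⟩
  · rintro r ⟨-, -, -, -, rfl⟩
    exact infDist_nonneg
  · exact fun h ↦ h2 (by linear_combination h)
  · exact fun h ↦ h1 (by linear_combination h)

theorem interior_angle_bounds_general (n : ℕ) [NeZero n] (hn : 3 ≤ n)
    (v : ZMod n → EuclideanSpace ℝ (Fin 2))
    (hconv : ∀ i : ZMod n, 0 < cross2 (v (i + 1) - v i) (v (i + 2) - v (i + 1)))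
    (hK : ℝ) (hKdef : hK = Metric.diam (Set.range v))
    (hstar : ℝ)
    (hstardef : hstar = sInf {r : ℝ | ∃ i j : ZMod n, j ≠ i ∧ j ≠ i + 1 ∧
      r = Metric.infDist (v j)
        (affineSpan ℝ {v i, v (i + 1)} : Set (EuclideanSpace ℝ (Fin 2)))})
    (Cs : ℝ) (hgeo : Cs * hK ≤ hstar) :
    ∀ i : ZMod n,
      Cs ≤ Real.sin (EuclideanGeometry.angle (v (i - 1)) (v i) (v (i + 1))) ∧
      Real.arcsin Cs ≤ EuclideanGeometry.angle (v (i - 1)) (v i) (v (i + 1)) ∧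
      EuclideanGeometry.angle (v (i - 1)) (v i) (v (i + 1)) ≤ Real.pi - Real.arcsin Cs := by
  intro i
  have hprev : v (i - 1) ≠ v i := by
    have := left_ne_zero_of_cross2 (hconv (i - 1)).ne'
    rwa [sub_add_cancel, sub_ne_zero, ne_comm] at this
  have hdiam : ∀ j k, dist (v j) (v k) ≤ hK := fun j k ↦
    hKdef ▸ dist_le_diam_of_mem (Set.finite_range v).isBounded ⟨j, rfl⟩ ⟨k, rfl⟩
  have hK_pos : 0 < hK := (dist_pos.mpr hprev).trans_le (hdiam _ _)
  have hθ₀ := angle_nonneg (v (i - 1)) (v i) (v (i + 1))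
  have hθπ := angle_le_pi (v (i - 1)) (v i) (v (i + 1))
  have hsin : Cs ≤ sin (∠ (v (i - 1)) (v i) (v (i + 1))) := by
    refine le_of_mul_le_mul_right ?_ hK_pos
    calc Cs * hK ≤ hstar := hgeo
      _ ≤ infDist (v (i + 1)) (affineSpan ℝ {v (i - 1), v i} : Set _) :=
          hstardef ▸ sInf_infDist_vertex_edgeLine_le hn v i
      _ ≤ dist (v i) (v (i + 1)) * sin (∠ (v (i - 1)) (v i) (v (i + 1))) :=
          infDist_affineSpan_pair_le_dist_mul_sin_angle _ hprev
      _ ≤ hK * sin (∠ (v (i - 1)) (v i) (v (i + 1))) :=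
          mul_le_mul_of_nonneg_right (hdiam _ _) (sin_nonneg_of_nonneg_of_le_pi hθ₀ hθπ)
      _ = sin (∠ (v (i - 1)) (v i) (v (i + 1))) * hK := mul_comm _ _
  exact ⟨hsin, arcsin_le_of_le_sin hθ₀ hθπ hsin, le_pi_sub_arcsin_of_le_sin hθ₀ hθπ hsin⟩

/-- **Angle bounds for shape-regular polygons.** Let `K` be a non-degenerate convex
polygon with vertices `v₀, …, v_{n−1}` in counterclockwise order (strict convexity is
expressed by positivity of consecutive edge cross products), diameter `h_K`, and `h⋆` the
minimal distance from a vertex to the line of a non-incident edge. If `h⋆ ≥ C⋆ h_K` with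
`C⋆ > 0`, then every interior angle `θᵢ = ∠(v_{i−1}, vᵢ, v_{i+1})` satisfies
`sin θᵢ ≥ C⋆`; in particular `θᵢ ∈ [arcsin C⋆, π − arcsin C⋆]`. -/
theorem interior_angle_bounds (n : ℕ) [NeZero n] (hn : 3 ≤ n)
    (v : ZMod n → EuclideanSpace ℝ (Fin 2))
    (hconv : ∀ i : ZMod n, 0 < cross2 (v (i + 1) - v i) (v (i + 2) - v (i + 1)))
    (hK : ℝ) (hKdef : hK = Metric.diam (Set.range v))
    (hstar : ℝ)
    (hstardef : hstar = sInf {r : ℝ | ∃ i j : ZMod n, j ≠ i ∧ j ≠ i + 1 ∧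
      r = Metric.infDist (v j)
        (affineSpan ℝ {v i, v (i + 1)} : Set (EuclideanSpace ℝ (Fin 2)))})
    (Cs : ℝ) (hCs : 0 < Cs) (hgeo : Cs * hK ≤ hstar) :
    ∀ i : ZMod n,
      Cs ≤ Real.sin (EuclideanGeometry.angle (v (i - 1)) (v i) (v (i + 1))) ∧
      Real.arcsin Cs ≤ EuclideanGeometry.angle (v (i - 1)) (v i) (v (i + 1)) ∧
      EuclideanGeometry.angle (v (i - 1)) (v i) (v (i + 1)) ≤ Real.pi - Real.arcsin Cs :=
  interior_angle_bounds_general n hn v hconv hK hKdef hstar hstardef Cs hgeo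
end
end
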